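/- If S is a t-signed subset of N, then the ideal J̃^{⟨t⟩}_S generated by the binomials h_{S,i,a,b} is a prime ideal of R = k[x_a : a ∈ N], and so is Q^{⟨t⟩}_S = Var^{⟨t⟩}_S + J̃^{⟨t⟩}_S. -/

import Mathlib

open MvPolynomial Finset

/-- The index set `N = [r 1] × ⋯ × [r n]`, realized as dependent functions. -/
abbrev Idx {n : ℕ} (r : Fin n → ℕ) := ∀ i, Fin (r i)

variable {n : ℕ} {r : Fin n → ℕ}

/-- The switch `s(K,a,b)`: `b i` in the components of `K`, `a i` elsewhere. -/
def sw (K : Finset (Fin n)) (a b : Idx r) : Idx r := fun i => if i ∈ K then b i else a i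

/-- The distance `d(a,b) = #{i : a i ≠ b i}`. -/
def hdist (a b : Idx r) : ℕ := (univ.filter fun i => a i ≠ b i).card

/-- The truncated distance `d_t(a,b) = #{i ∈ [t] : a i ≠ b i}`. -/
def hdistT (t : ℕ) (a b : Idx r) : ℕ :=
  (univ.filter fun i : Fin n => (i : ℕ) < t ∧ a i ≠ b i).card

/-- `c : ℕ → N` is a path of length `m` from `a` to `b` inside `S`:
consecutive elements differ in exactly one component. -/
def IsPath (S : Set (Idx r)) (a b : Idx r) (m : ℕ) (c : ℕ → Idx r) : Prop :=
  c 0 = a ∧ c m = b ∧ (∀ j ≤ m, c j ∈ S) ∧ ∀ j < m, hdist (c j) (c (j + 1)) = 1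

/-- `a` and `b` are connected in `S`. -/
def Connected (S : Set (Idx r)) (a b : Idx r) : Prop := ∃ m c, IsPath S a b m c

/-- The minimal path length `pl_S(a,b)`. -/
noncomputable def pl (S : Set (Idx r)) (a b : Idx r) : ℕ :=
  sInf {m | ∃ c, IsPath S a b m c}

/-- `S` is `t`-switchable. -/
def Switchable (t : ℕ) (S : Set (Idx r)) : Prop :=
  ∀ a ∈ S, ∀ b ∈ S, hdist a b = 2 → ∀ i : Fin n, (i : ℕ) < t →
    sw {i} a b ∈ S ∧ sw {i} b a ∈ S

/-- `S` is `t`-signed: `t`-switchable, and each connectedness class satisfies one of: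
constant first `t` coordinates, pairwise distance at most 1, or path-independent
parity of path lengths. -/
def Signed (t : ℕ) (S : Set (Idx r)) : Prop :=
  Switchable t S ∧
  ∀ a ∈ S,
    (∀ b c, Connected S a b → Connected S a c → ∀ i : Fin n, (i : ℕ) < t → b i = c i) ∨
    (∀ b c, Connected S a b → Connected S a c → hdist b c ≤ 1) ∨
    (∀ b c, Connected S a b → Connected S a c →
      ∀ m m' p p', IsPath S b c m p → IsPath S b c m' p' → m % 2 = m' % 2)

variable (k : Type*) [Field k]

/-- The generalized determinant `f_{i,a,b}`. -/
noncomputable def fdet (i : Fin n) (a b : Idx r) : MvPolynomial (Idx r) k :=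
  X a * X b - X (sw {i} a b) * X (sw {i} b a)

/-- The generalized permanent `g_{i,a,b}`. -/
noncomputable def gperm (i : Fin n) (a b : Idx r) : MvPolynomial (Idx r) k :=
  X a * X b + X (sw {i} a b) * X (sw {i} b a)

/-- The binomial `h_{S,K,a,b}`. -/
noncomputable def hbin (S : Set (Idx r)) (K : Finset (Fin n)) (a b : Idx r) :
    MvPolynomial (Idx r) k :=
  X a * X b - (-1) ^ (K.card * (pl S a b - 1)) * (X (sw K a b) * X (sw K b a))

/-- The slice permanental ideal `J^⟨t⟩`. -/
noncomputable def Jt (t : ℕ) : Ideal (MvPolynomial (Idx r) k) :=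
  Ideal.span {p | ∃ (a b : Idx r) (i : Fin n),
    hdist a b = 2 ∧ (i : ℕ) < t ∧ a i ≠ b i ∧ p = gperm k i a b}

/-- The ideal `J̃^⟨t⟩_S`. -/
noncomputable def Jtilde (t : ℕ) (S : Set (Idx r)) : Ideal (MvPolynomial (Idx r) k) :=
  Ideal.span {p | ∃ (a b : Idx r) (i : Fin n),
    Connected S a b ∧ (i : ℕ) < t ∧ a i ≠ b i ∧ p = hbin k S {i} a b}

/-- The ideal `Var^⟨t⟩_S = (x_a : a ∉ S)`. -/
noncomputable def VarIdeal (S : Set (Idx r)) : Ideal (MvPolynomial (Idx r) k) :=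
  Ideal.span {p | ∃ a ∉ S, p = X a}

/-- The ideal `Q^⟨t⟩_S = Var^⟨t⟩_S + J̃^⟨t⟩_S`. -/
noncomputable def Qideal (t : ℕ) (S : Set (Idx r)) : Ideal (MvPolynomial (Idx r) k) :=
  VarIdeal k S + Jtilde k t S

/-- The ideal `Ĵ^⟨t⟩`. -/
noncomputable def Jhat (t : ℕ) : Ideal (MvPolynomial (Idx r) k) :=
  Ideal.span {p | ∃ (a b : Idx r) (i : Fin n),
    hdist a b = 3 ∧ hdistT t a b = 3 ∧ (i : ℕ) < t ∧ a i ≠ b i ∧ p = gperm k i a b}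

/-- `S` is a maximal `t`-signed set. -/
noncomputable def MaximalSigned (t : ℕ) (S : Set (Idx r)) : Prop :=
  Signed t S ∧ ∀ T : Set (Idx r), Signed t T → S ⊆ T → Qideal k t S ≤ Qideal k t T

/-!
Both ideals are kernels of monomial maps into a polynomial ring, hence prime.

Join two points of `S` by an edge when they are at Hamming distance one, and fix a base point `o`
in each connected component. Send `x_a` to `±y^{w(a)}`, where `w(a)` records the component of `a`,
its coordinates outside `[t]` and the pairs `(i, a_i)` for `i < t`, and the sign is
`(-1)^binom(d(o,a), 2)`; for `Q` also send `x_a` to `0` when `a ∉ S`. Switching the `i`-th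
coordinates (`i < t`) of two points `a, b` of a component keeps `w(a) + w(b)`, and, by
`t`-switchability and induction along geodesics to `o`, also `d(o,a) + d(o,b)`. Under the parity
condition this is exactly what makes the signs of `h_{S,i,a,b}` match, so the generators lie in
the kernel; the other two conditions leave only trivial switches. Conversely, two monomials of the
same weight are joined by a chain of switches, each step a multiple of a generator, so the kernel
is no larger than the ideal.
-/

open Function SimpleGraph

section MonomialMap

variable {k} {σ τ : Type*} (w : σ → τ →₀ ℕ) (ε : σ → k)

noncomputable def monomialMap : MvPolynomial σ k →ₐ[k] MvPolynomial τ k :=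
  aeval fun a => monomial (w a) (ε a)

lemma monomialMap_monomial [DecidableEq σ] (A : Multiset σ) (c : k) :
    monomialMap w ε (monomial (Multiset.toFinsupp A) c) =
      monomial (A.map w).sum (c * (A.map ε).prod) := by
  induction A using Multiset.induction_on with
  | empty => simp [monomialMap, ← C_apply]
  | cons a A ih =>
    rw [← Multiset.singleton_add, Multiset.toFinsupp_add, Multiset.toFinsupp_singleton,
      monomial_single_add, pow_one, map_mul, ih, monomialMap, aeval_X, monomial_mul]
    simp [mul_left_comm]

lemma monomialMap_X_mul_X_sub {a b a' b' : σ} {c : k} (hw : w a + w b = w a' + w b')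
    (hε : ε a * ε b = c * (ε a' * ε b')) :
    monomialMap w ε (X a * X b - C c * (X a' * X b')) = 0 := by
  simp only [monomialMap, map_sub, map_mul, aeval_X, aeval_C, algebraMap_eq, C_mul_monomial,
    monomial_mul, hw, hε, sub_self]

theorem ker_monomialMap_le [DecidableEq σ] {I : Ideal (MvPolynomial σ k)}
    (hzero : ∀ A : Multiset σ, (A.map ε).prod = 0 → monomial (Multiset.toFinsupp A) 1 ∈ I)
    (hbinom : ∀ A B : Multiset σ, (A.map w).sum = (B.map w).sum → (A.map ε).prod ≠ 0 →
      (B.map ε).prod ≠ 0 → monomial (Multiset.toFinsupp A) (A.map ε).prod⁻¹ -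
        monomial (Multiset.toFinsupp B) (B.map ε).prod⁻¹ ∈ I) :
    RingHom.ker (monomialMap w ε) ≤ I := by
  classical
  -- `s` sends `y^ω` to a monomial of weight `ω` normalised to map back to `y^ω`, so it is a
  -- linear section over the image and each `f - s (monomialMap w ε f)` is a sum of binomials.
  let g : (τ →₀ ℕ) → MvPolynomial σ k := fun ω =>
    if h : ∃ B : Multiset σ, (B.map w).sum = ω ∧ (B.map ε).prod ≠ 0 then
      monomial (Multiset.toFinsupp h.choose) (h.choose.map ε).prod⁻¹ else 0
  let s := (basisMonomials τ k).constr k g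
  have hs : ∀ ω c, s (monomial ω c) = c • g ω := fun ω c => by
    rw [show monomial ω c = c • monomial ω (1 : k) by rw [smul_monomial, smul_eq_mul, mul_one],
      map_smul]
    exact congrArg (c • ·) ((basisMonomials τ k).constr_basis k g ω)
  have key : ∀ f, f - s (monomialMap w ε f) ∈ I := by
    intro f
    induction f using MvPolynomial.induction_on' with
    | monomial u c =>
      obtain ⟨A, rfl⟩ : ∃ A : Multiset σ, Multiset.toFinsupp A = u :=
        ⟨u.toMultiset, u.toMultiset_toFinsupp⟩
      rw [monomialMap_monomial, hs]
      by_cases hA : (A.map ε).prod = 0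
      · rw [hA, mul_zero, zero_smul, sub_zero, ← mul_one c, ← smul_eq_mul, ← smul_monomial]
        exact I.smul_of_tower_mem c (hzero A hA)
      · have h : ∃ B : Multiset σ, (B.map w).sum = (A.map w).sum ∧ (B.map ε).prod ≠ 0 :=
          ⟨A, rfl, hA⟩
        obtain ⟨hw, hB⟩ := h.choose_spec
        have hmem := I.smul_of_tower_mem (c * (A.map ε).prod) (hbinom A _ hw.symm hA hB)
        simp only [g, dif_pos h]
        rwa [smul_sub, smul_monomial, smul_eq_mul, mul_assoc, mul_inv_cancel₀ hA, mul_one]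
          at hmem
    | add p q hp hq =>
      rw [map_add, map_add]
      convert add_mem hp hq using 1
      abel
  intro f hf
  simpa [RingHom.mem_ker.1 hf] using key f

end MonomialMap

lemma SimpleGraph.Reachable.exists_adj_dist_add_one {V : Type*} {G : SimpleGraph V} {u v : V}
    (h : G.Reachable u v) (hne : u ≠ v) : ∃ w, G.Adj u w ∧ G.dist w v + 1 = G.dist u v := by
  obtain ⟨p, hp⟩ := h.exists_walk_length_eq_dist
  cases p with
  | nil => exact absurd rfl hne
  | cons hadj q =>
    refine ⟨_, hadj, le_antisymm ?_ ?_⟩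
    · have := dist_le q
      rw [Walk.length_cons] at hp
      omega
    · have := hadj.reachable.dist_triangle_left v
      rwa [dist_eq_one_iff_adj.2 hadj, add_comm] at this

lemma SimpleGraph.Adj.dist_le_add_one {V : Type*} {G : SimpleGraph V} {u v w : V}
    (h : G.Adj v w) : G.dist u w ≤ G.dist u v + 1 := by
  rcases h.diff_dist_adj (u := u) with h | h | h <;> omega

section HammingGraph

variable {S : Set (Idx r)} {a b : Idx r}

lemma hdist_comm (a b : Idx r) : hdist a b = hdist b a := by
  simp only [hdist, ne_comm]

lemma sw_singleton (i : Fin n) (a b : Idx r) : sw {i} a b = update a i (b i) := by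
  ext j
  by_cases h : j = i
  · subst h; simp [sw]
  · simp [sw, h]

lemma hdist_update_self {i : Fin n} {x : Fin (r i)} (h : a i ≠ x) :
    hdist a (update a i x) = 1 := by
  rw [hdist, Finset.card_eq_one]
  refine ⟨i, Finset.ext fun j => ?_⟩
  by_cases hj : j = i
  · subst hj; simp [h]
  · simp [hj]

lemma hdist_update_update {i j : Fin n} {x : Fin (r j)} {y : Fin (r i)} (hij : i ≠ j)
    (hx : a j ≠ x) (hy : a i ≠ y) : hdist a (update (update a j x) i y) = 2 := by
  rw [hdist, Finset.card_eq_two]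
  refine ⟨i, j, hij, Finset.ext fun l => ?_⟩
  by_cases hli : l = i
  · subst hli; simp [hy]
  · by_cases hlj : l = j
    · subst hlj; simp [hli, hx]
    · simp [hli, hlj]

lemma exists_eq_update_of_hdist_eq_one (h : hdist a b = 1) :
    ∃ j x, a j ≠ x ∧ b = update a j x := by
  obtain ⟨j, hj⟩ := Finset.card_eq_one.1 h
  have hdiff : ∀ l, a l ≠ b l ↔ l = j := fun l => by
    simpa using Finset.ext_iff.1 hj l
  refine ⟨j, b j, (hdiff j).2 rfl, funext fun l => ?_⟩
  by_cases hl : l = j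
  · subst hl; simp
  · rw [update_of_ne hl]
    exact (not_not.1 ((hdiff l).not.2 hl)).symm

lemma hdist_update_lt {i : Fin n} (h : a i ≠ b i) :
    hdist (update a i (b i)) b < hdist a b := by
  have : (univ.filter fun l => update a i (b i) l ≠ b l) =
      (univ.filter fun l => a l ≠ b l).erase i := by
    ext l
    by_cases hl : l = i
    · subst hl; simp
    · simp [hl]
  rw [hdist, hdist, this]
  exact Finset.card_erase_lt_of_mem (by simpa using h)

-- Vertices outside `S` are isolated, so walks are the paths of `IsPath` and the components are
-- the connectedness classes of `S` together with singletons.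
variable (S) in
def hammingGraph : SimpleGraph (Idx r) where
  Adj a b := a ∈ S ∧ b ∈ S ∧ hdist a b = 1
  symm := ⟨fun a b h => ⟨h.2.1, h.1, hdist_comm a b ▸ h.2.2⟩⟩
  loopless := ⟨fun a h => by simp [hdist] at h⟩

lemma mem_of_reachable (ha : a ∈ S) (h : (hammingGraph S).Reachable a b) : b ∈ S := by
  obtain ⟨p⟩ := h
  induction p with
  | nil => exact ha
  | cons hadj _ ih => exact ih hadj.2.1

lemma mem_of_reachable_of_ne (h : (hammingGraph S).Reachable a b) (hne : a ≠ b) : a ∈ S := by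
  obtain ⟨p⟩ := h
  cases p with
  | nil => exact absurd rfl hne
  | cons hadj _ => exact hadj.1

lemma exists_isPath_iff {m : ℕ} :
    (∃ c, IsPath S a b m c) ↔ a ∈ S ∧ ∃ p : (hammingGraph S).Walk a b, p.length = m := by
  constructor
  · rintro ⟨c, hc⟩
    induction m generalizing a c with
    | zero =>
      obtain ⟨rfl, rfl, hmem, -⟩ := hc
      exact ⟨hmem 0 le_rfl, .nil, rfl⟩
    | succ m ih =>
      obtain ⟨rfl, hm, hmem, hstep⟩ := hc
      obtain ⟨-, p, hp⟩ := ih (c := fun j => c (j + 1))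
        ⟨rfl, hm, fun j hj => hmem _ (by omega), fun j hj => hstep _ (by omega)⟩
      exact ⟨hmem 0 (by omega),
        .cons (show (hammingGraph S).Adj (c 0) (c 1) from
          ⟨hmem 0 (by omega), hmem 1 (by omega), hstep 0 (by omega)⟩) p, by simp [hp]⟩
  · rintro ⟨ha, p, rfl⟩
    refine ⟨p.getVert, p.getVert_zero, p.getVert_length, fun j hj => ?_,
      fun j hj => (p.adj_getVert_succ hj).2.2⟩
    rcases hj.lt_or_eq with hj | rfl
    · exact (p.adj_getVert_succ hj).1
    · rw [p.getVert_length]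
      exact mem_of_reachable ha p.reachable

lemma connected_iff : Connected S a b ↔ a ∈ S ∧ (hammingGraph S).Reachable a b := by
  constructor
  · rintro ⟨m, c, hc⟩
    obtain ⟨ha, p, -⟩ := exists_isPath_iff.1 ⟨c, hc⟩
    exact ⟨ha, p.reachable⟩
  · rintro ⟨ha, ⟨p⟩⟩
    obtain ⟨c, hc⟩ := exists_isPath_iff.2 ⟨ha, p, rfl⟩
    exact ⟨_, c, hc⟩

lemma pl_eq_dist : pl S a b = (hammingGraph S).dist a b := by
  by_cases ha : a ∈ S
  · rw [pl, dist_eq_sInf]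
    congr 1
    ext m
    simp [exists_isPath_iff, ha]
  · have hempty : {m | ∃ c, IsPath S a b m c} = ∅ := by
      ext m
      simp [exists_isPath_iff, ha]
    rw [pl, hempty, Nat.sInf_empty, eq_comm, dist_eq_zero_iff_eq_or_not_reachable]
    by_contra! h
    exact ha (mem_of_reachable_of_ne h.2 h.1)

end HammingGraph

section Switching

variable {S : Set (Idx r)} {t : ℕ} {a b o u : Idx r} {i j : Fin n}

lemma adj_update {y : Fin (r j)} (hu : u ∈ S) (hv : update u j y ∈ S) (hy : u j ≠ y) :
    (hammingGraph S).Adj u (update u j y) :=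
  ⟨hu, hv, hdist_update_self hy⟩

lemma dist_update_le {y : Fin (r j)} (hu : u ∈ S) (hv : update u j y ∈ S) :
    (hammingGraph S).dist o (update u j y) ≤ (hammingGraph S).dist o u + 1 := by
  by_cases hy : u j = y
  · rw [← hy, update_eq_self]; omega
  · exact (adj_update hu hv hy).dist_le_add_one

lemma dist_le_dist_update {y : Fin (r j)} (hu : u ∈ S) (hv : update u j y ∈ S) :
    (hammingGraph S).dist o u ≤ (hammingGraph S).dist o (update u j y) + 1 := by
  by_cases hy : u j = y
  · rw [← hy, update_eq_self]; omega
  · exact (adj_update hu hv hy).symm.dist_le_add_one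

lemma update_mem_of_reachable (hsw : Switchable t S) (ha : a ∈ S)
    (hab : (hammingGraph S).Reachable a b) (hi : (i : ℕ) < t) : update a i (b i) ∈ S := by
  obtain ⟨p⟩ := hab
  induction p with
  | nil => simpa using ha
  | @cons a a₁ b hadj p ih =>
    have hu := ih hadj.2.1
    obtain ⟨j, x, hx, rfl⟩ := exists_eq_update_of_hdist_eq_one hadj.2.2
    by_cases hji : j = i
    · subst hji
      simpa using hu
    · by_cases hb : a i = b i
      · rwa [← hb, update_eq_self]
      · simpa [sw_singleton] using
          (hsw a ha _ hu (hdist_update_update (Ne.symm hji) hx hb) i hi).1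

end Switching

section KeyLemma

variable {S : Set (Idx r)} {t : ℕ} {o : Idx r} {i : Fin n}

local notation "D" => SimpleGraph.dist (hammingGraph S) o

lemma dist_update_add_le_of_closer {a b : Idx r} (hsw : Switchable t S) (ho : o ∈ S)
    (hoa : (hammingGraph S).Reachable o a) (hob : (hammingGraph S).Reachable o b)
    (hi : (i : ℕ) < t) (hne : a i ≠ b i) (hao : a ≠ o)
    (ih : ∀ a₁, D a₁ < D a → (hammingGraph S).Reachable o a₁ → a₁ i ≠ b i →
      D (update a₁ i (b i)) + D (update b i (a₁ i)) ≤ D a₁ + D b) :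
    D (update a i (b i)) + D (update b i (a i)) ≤ D a + D b := by
  have ha := mem_of_reachable ho hoa
  have hb := mem_of_reachable ho hob
  have hab := hoa.symm.trans hob
  have hsb : update b i (a i) ∈ S := update_mem_of_reachable hsw hb hab.symm hi
  obtain ⟨a₁, hadj, hd⟩ := hoa.symm.exists_adj_dist_add_one hao
  rw [SimpleGraph.dist_comm, SimpleGraph.dist_comm (u := a)] at hd
  have hoa₁ := hoa.trans hadj.reachable
  have hab₁ := hadj.reachable.symm.trans hab
  have hsb₁ : update b i (a₁ i) ∈ S := update_mem_of_reachable hsw hb hab₁.symm hi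
  obtain ⟨j, x, hx, rfl⟩ := exists_eq_update_of_hdist_eq_one hadj.2.2
  by_cases hji : j = i
  · subst hji
    by_cases hxb : x = b j
    · -- switching `a` at `j` lands on the closer neighbour itself
      subst hxb
      have := dist_update_le (o := o) hb hsb
      omega
    · have hIH := ih _ (by omega) hoa₁ (by simpa using hxb)
      have := dist_update_le (o := o) (y := a j) (by simpa using hsb₁) (by simpa using hsb)
      simp only [update_idem, update_self] at hIH this
      omega
  · have hIH := ih _ (by omega) hoa₁ (by simpa [Ne.symm hji] using hne)
    have := dist_le_dist_update (o := o) (y := x) (update_mem_of_reachable hsw ha hab hi)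
      (by rw [update_comm (Ne.symm hji)]; exact update_mem_of_reachable hsw hadj.2.1 hab₁ hi)
    rw [update_comm (Ne.symm hji)] at this
    simp only [update_of_ne (Ne.symm hji)] at hIH
    omega

theorem dist_update_add_le {a b : Idx r} (hsw : Switchable t S) (ho : o ∈ S)
    (hoa : (hammingGraph S).Reachable o a) (hob : (hammingGraph S).Reachable o b)
    (hi : (i : ℕ) < t) (hne : a i ≠ b i) :
    D (update a i (b i)) + D (update b i (a i)) ≤ D a + D b := by
  by_cases hao : a = o
  · have hbo : b ≠ o := fun h => hne (by rw [hao, h])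
    have := dist_update_add_le_of_closer hsw ho hob hoa hi hne.symm hbo
      fun b₁ _ hob₁ hne₁ => dist_update_add_le hsw ho hob₁ hoa hi hne₁
    omega
  · exact dist_update_add_le_of_closer hsw ho hoa hob hi hne hao
      fun a₁ _ hoa₁ hne₁ => dist_update_add_le hsw ho hoa₁ hob hi hne₁
termination_by (hammingGraph S).dist o a + (hammingGraph S).dist o b

theorem dist_update_add_eq {a b : Idx r} (hsw : Switchable t S) (ho : o ∈ S)
    (hoa : (hammingGraph S).Reachable o a) (hob : (hammingGraph S).Reachable o b)
    (hi : (i : ℕ) < t) (hne : a i ≠ b i) :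
    D (update a i (b i)) + D (update b i (a i)) = D a + D b := by
  have ha := mem_of_reachable ho hoa
  have hb := mem_of_reachable ho hob
  have hab := hoa.symm.trans hob
  have hsa := adj_update ha (update_mem_of_reachable hsw ha hab hi) hne
  have hsb := adj_update hb (update_mem_of_reachable hsw hb hab.symm hi) hne.symm
  refine le_antisymm (dist_update_add_le hsw ho hoa hob hi hne) ?_
  simpa using dist_update_add_le hsw ho (hoa.trans hsa.reachable) (hob.trans hsb.reachable) hi
    (by simpa using hne.symm)

end KeyLemma

lemma neg_one_pow_choose_two_mul {R : Type*} [Ring R] {A B G E P : ℕ} (hsum : G + E = A + B)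
    (hG : G = A + 1 ∨ A = G + 1) (hE : E = B + 1 ∨ B = E + 1) (hP : P % 2 = (A + B) % 2)
    (hP1 : 1 ≤ P) :
    (-1 : R) ^ A.choose 2 * (-1) ^ B.choose 2 =
      (-1) ^ (P - 1) * ((-1) ^ G.choose 2 * (-1) ^ E.choose 2) := by
  rw [← pow_add, ← pow_add, ← pow_add, neg_one_pow_eq_pow_mod_two,
    neg_one_pow_eq_pow_mod_two (n := P - 1 + _)]
  have hsucc (m : ℕ) : (m + 1).choose 2 = m.choose 2 + m := by
    rw [Nat.choose_succ_succ', Nat.choose_one_right, add_comm]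
  congr 1
  rcases hG with rfl | rfl <;> rcases hE with rfl | rfl <;> simp only [hsucc] at * <;> omega

section Sign

variable {S : Set (Idx r)} {t : ℕ} {a b o u v : Idx r} {i : Fin n}

variable (S) in
noncomputable def root (a : Idx r) : Idx r := ((hammingGraph S).connectedComponentMk a).out

lemma reachable_root (a : Idx r) : (hammingGraph S).Reachable (root S a) a :=
  ConnectedComponent.exact (Quot.out_eq _)

lemma root_eq_of_reachable (h : (hammingGraph S).Reachable a b) : root S a = root S b := by
  rw [root, root, ConnectedComponent.sound h]

variable (S) in
noncomputable def sgn (a : Idx r) : k := (-1) ^ ((hammingGraph S).dist (root S a) a).choose 2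

lemma sgn_mul_self (a : Idx r) : sgn k S a * sgn k S a = 1 := by
  rw [sgn, ← pow_add, ← two_mul, pow_mul, neg_one_sq, one_pow]

lemma dist_mod_two_eq (ha : a ∈ S)
    (hpar : ∀ b c, Connected S a b → Connected S a c →
      ∀ m m' p p', IsPath S b c m p → IsPath S b c m' p' → m % 2 = m' % 2)
    (hu : (hammingGraph S).Reachable a u) (hv : (hammingGraph S).Reachable a v)
    (ho : (hammingGraph S).Reachable a o) :
    (hammingGraph S).dist u v % 2 =
      ((hammingGraph S).dist o u + (hammingGraph S).dist o v) % 2 := by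
  obtain ⟨p, hp⟩ := (hu.symm.trans hv).exists_walk_length_eq_dist
  obtain ⟨q, hq⟩ := (ho.symm.trans hu).exists_walk_length_eq_dist
  obtain ⟨q', hq'⟩ := (ho.symm.trans hv).exists_walk_length_eq_dist
  have huS := mem_of_reachable ha hu
  obtain ⟨c, hc⟩ := exists_isPath_iff.2 ⟨huS, p, rfl⟩
  obtain ⟨c', hc'⟩ := exists_isPath_iff.2 ⟨huS, q.reverse.append q', rfl⟩
  rw [← hp, ← hq, ← hq', ← Walk.length_reverse q, ← Walk.length_append]
  exact hpar u v (connected_iff.2 ⟨ha, hu⟩) (connected_iff.2 ⟨ha, hv⟩) _ _ _ _ hc hc'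

lemma sgn_mul_sgn_of_parity (hsw : Switchable t S) (ha : a ∈ S)
    (hpar : ∀ b c, Connected S a b → Connected S a c →
      ∀ m m' p p', IsPath S b c m p → IsPath S b c m' p' → m % 2 = m' % 2)
    (hab : (hammingGraph S).Reachable a b) (hi : (i : ℕ) < t) (hne : a i ≠ b i) :
    sgn k S a * sgn k S b = (-1) ^ ((hammingGraph S).dist a b - 1) *
      (sgn k S (update a i (b i)) * sgn k S (update b i (a i))) := by
  have hb := mem_of_reachable ha hab
  have has := adj_update ha (update_mem_of_reachable hsw ha hab hi) hne
  have hbs := adj_update hb (update_mem_of_reachable hsw hb hab.symm hi) hne.symm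
  have hoa := reachable_root (S := S) a
  have ho := mem_of_reachable ha hoa.symm
  have hrb := root_eq_of_reachable hab
  have hras := root_eq_of_reachable has.reachable
  have hrbs := root_eq_of_reachable (hab.trans hbs.reachable)
  simp only [sgn, ← hrb, ← hras, ← hrbs]
  -- a switched point is adjacent to the original one, and its distance to the root has the
  -- other parity, so the two distances differ by exactly one
  have hpa := dist_mod_two_eq ha hpar (.refl a) has.reachable hoa.symm
  have hpb := dist_mod_two_eq ha hpar hab (hab.trans hbs.reachable) hoa.symm
  rw [dist_eq_one_iff_adj.2 has] at hpa
  rw [dist_eq_one_iff_adj.2 hbs] at hpb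
  have hda := has.diff_dist_adj (u := root S a)
  have hdb := hbs.diff_dist_adj (u := root S a)
  apply neg_one_pow_choose_two_mul
    (dist_update_add_eq hsw ho hoa (hoa.trans hab) hi hne) (by omega) (by omega)
    (dist_mod_two_eq ha hpar (.refl a) hab hoa.symm)
  exact hab.pos_dist_of_ne fun h => hne (h ▸ rfl)

theorem sgn_mul_sgn (hS : Signed t S) (ha : a ∈ S) (hab : (hammingGraph S).Reachable a b)
    (hi : (i : ℕ) < t) (hne : a i ≠ b i) :
    sgn k S a * sgn k S b = (-1) ^ ((hammingGraph S).dist a b - 1) *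
      (sgn k S (update a i (b i)) * sgn k S (update b i (a i))) := by
  have hca : Connected S a a := connected_iff.2 ⟨ha, .refl a⟩
  have hcb : Connected S a b := connected_iff.2 ⟨ha, hab⟩
  rcases hS.2 a ha with hconst | hnear | hpar
  · exact absurd (hconst a b hca hcb i hi) hne
  · have hpos : 0 < hdist a b := Finset.card_pos.2 ⟨i, by simpa using hne⟩
    have h1 : hdist a b = 1 := le_antisymm (hnear a b hca hcb) hpos
    obtain ⟨j, x, hx, rfl⟩ := exists_eq_update_of_hdist_eq_one h1
    obtain rfl : j = i := by
      by_contra h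
      exact hne (by simp [Ne.symm h])
    have hadj : (hammingGraph S).Adj a _ := ⟨ha, mem_of_reachable ha hab, h1⟩
    rw [dist_eq_one_iff_adj.2 hadj]
    simp [mul_comm]
  · exact sgn_mul_sgn_of_parity k hS.1 ha hpar hab hi hne

end Sign

section Straightening

variable {t : ℕ} {S : Set (Idx r)} {a b : Idx r} {i : Fin n}

variable (t) in
def tail (a : Idx r) : Fin n → ℕ := fun i => if (i : ℕ) < t then 0 else a i

lemma tail_update (hi : (i : ℕ) < t) (x : Fin (r i)) : tail t (update a i x) = tail t a := by
  ext j
  by_cases hj : j = i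
  · subst hj; simp [tail, hi]
  · simp [tail, hj]

-- The variables of the target ring: a component together with either a tail (`tail t a`) or a
-- slice value `(i, a i)` with `i < t`.
variable (S) in
abbrev Tag := (hammingGraph S).ConnectedComponent × ((Fin n → ℕ) ⊕ Fin n × ℕ)

variable (t S) in
def tags (a : Idx r) : Multiset (Tag S) :=
  {((hammingGraph S).connectedComponentMk a, .inl (tail t a))} +
    ∑ i ∈ univ.filter (fun i : Fin n => (i : ℕ) < t),
      {((hammingGraph S).connectedComponentMk a, .inr (i, (a i : ℕ)))}

lemma mem_tags {γ : Tag S} :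
    γ ∈ tags t S a ↔ γ = ((hammingGraph S).connectedComponentMk a, .inl (tail t a)) ∨
      ∃ i : Fin n, (i : ℕ) < t ∧
        γ = ((hammingGraph S).connectedComponentMk a, .inr (i, (a i : ℕ))) := by
  simp [tags, Multiset.mem_sum]

lemma tags_add_tags (hsw : Switchable t S) (ha : a ∈ S) (hab : (hammingGraph S).Reachable a b)
    (hi : (i : ℕ) < t) (hne : a i ≠ b i) :
    tags t S a + tags t S b = tags t S (update a i (b i)) + tags t S (update b i (a i)) := by
  have hb := mem_of_reachable ha hab
  have has := adj_update ha (update_mem_of_reachable hsw ha hab hi) hne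
  have hbs := adj_update hb (update_mem_of_reachable hsw hb hab.symm hi) hne.symm
  simp only [tags, tail_update hi, ← ConnectedComponent.sound has.reachable,
    ← ConnectedComponent.sound hbs.reachable, ← ConnectedComponent.sound hab]
  rw [add_add_add_comm, ← sum_add_distrib, add_add_add_comm, ← sum_add_distrib]
  refine congrArg _ (sum_congr rfl fun j _ => ?_)
  by_cases hj : j = i
  · subst hj; simp [add_comm]
  · simp [hj]

lemma exists_mem_tail {B : Multiset (Idx r)} (h : tags t S a ≤ B.bind (tags t S)) :
    ∃ b₀ ∈ B, (hammingGraph S).Reachable b₀ a ∧ tail t b₀ = tail t a := by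
  obtain ⟨b₀, hb₀, hmem⟩ :=
    Multiset.mem_bind.1 (Multiset.mem_of_le h (mem_tags.2 (.inl rfl)))
  rcases mem_tags.1 hmem with h | ⟨_, _, h⟩
  · simp only [Prod.mk.injEq, Sum.inl.injEq] at h
    exact ⟨b₀, hb₀, ConnectedComponent.exact h.1.symm, h.2.symm⟩
  · simp at h

lemma exists_mem_slice {B : Multiset (Idx r)} (h : tags t S a ≤ B.bind (tags t S))
    (hi : (i : ℕ) < t) :
    ∃ b₁ ∈ B, (hammingGraph S).Reachable b₁ a ∧ b₁ i = a i := by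
  obtain ⟨b₁, hb₁, hmem⟩ :=
    Multiset.mem_bind.1 (Multiset.mem_of_le h (mem_tags.2 (.inr ⟨i, hi, rfl⟩)))
  rcases mem_tags.1 hmem with h | ⟨j, _, h⟩
  · simp at h
  · simp only [Prod.mk.injEq, Sum.inr.injEq] at h
    obtain ⟨hc, rfl, hv⟩ := h
    exact ⟨b₁, hb₁, ConnectedComponent.exact hc.symm, Fin.ext hv.symm⟩

variable (S) in
noncomputable def sgnMonomial (A : Multiset (Idx r)) : MvPolynomial (Idx r) k :=
  monomial (Multiset.toFinsupp A) (A.map (sgn k S)).prod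

lemma sgnMonomial_cons (a : Idx r) (A : Multiset (Idx r)) :
    sgnMonomial k S (a ::ₘ A) = C (sgn k S a) * X a * sgnMonomial k S A := by
  rw [sgnMonomial, sgnMonomial, ← Multiset.singleton_add, Multiset.toFinsupp_add,
    Multiset.toFinsupp_singleton, monomial_single_add, pow_one, Multiset.map_add,
    Multiset.prod_add, Multiset.map_singleton, Multiset.prod_singleton, ← C_mul_monomial,
    mul_left_comm, ← mul_assoc]

lemma hbin_singleton (a b : Idx r) (i : Fin n) :
    hbin k S {i} a b = X a * X b - C ((-1) ^ ((hammingGraph S).dist a b - 1)) *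
      (X (update a i (b i)) * X (update b i (a i))) := by
  simp [hbin, sw_singleton, pl_eq_dist]

lemma sgnMonomial_sub_sgnMonomial_update_mem (hS : Signed t S) (ha : a ∈ S)
    (hab : (hammingGraph S).Reachable a b) (hi : (i : ℕ) < t) (hne : a i ≠ b i)
    (B : Multiset (Idx r)) :
    sgnMonomial k S (a ::ₘ b ::ₘ B) -
      sgnMonomial k S (update a i (b i) ::ₘ update b i (a i) ::ₘ B) ∈ Jtilde k t S := by
  have hgen : hbin k S {i} a b ∈ Jtilde k t S :=
    Ideal.subset_span ⟨a, b, i, connected_iff.2 ⟨ha, hab⟩, hi, hne, rfl⟩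
  rw [hbin_singleton] at hgen
  have hsgn : sgn k S a * sgn k S b * (-1) ^ ((hammingGraph S).dist a b - 1) =
      sgn k S (update a i (b i)) * sgn k S (update b i (a i)) := by
    rw [sgn_mul_sgn k hS ha hab hi hne, mul_comm, ← mul_assoc, ← pow_add, ← two_mul, pow_mul,
      neg_one_sq, one_pow, one_mul]
  convert Ideal.mul_mem_left _ (C (sgn k S a * sgn k S b) * sgnMonomial k S B) hgen using 1
  have hC := congrArg (C : k → MvPolynomial (Idx r) k) hsgn
  simp only [sgnMonomial_cons, map_mul] at hC ⊢
  linear_combination (X (update a i (b i)) * X (update b i (a i)) * sgnMonomial k S B) * hC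

-- Some `b₁ ∈ B` carries the slice `(i, a i)` where `b₀` and `a` differ; switching `b₀` and `b₁`
-- at `i` moves `b₀` one step towards `a`.
lemma exists_sgnMonomial_sub_mem_closer {b₀ : Idx r} {B : Multiset (Idx r)} (hS : Signed t S)
    (h : tags t S a ≤ B.bind (tags t S)) (hb₀ : b₀ ∈ B)
    (hr : (hammingGraph S).Reachable b₀ a) (htail : tail t b₀ = tail t a)
    (hne : b₀ ≠ a) :
    ∃ B₂, ∃ b₀' ∈ B₂, (hammingGraph S).Reachable b₀' a ∧ tail t b₀' = tail t a ∧
      hdist b₀' a < hdist b₀ a ∧ B₂.bind (tags t S) = B.bind (tags t S) ∧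
      sgnMonomial k S B - sgnMonomial k S B₂ ∈ Jtilde k t S := by
  obtain ⟨i, hi⟩ := Function.ne_iff.1 hne
  have hit : (i : ℕ) < t := by
    by_contra hit
    have := congrFun htail i
    simp only [tail, if_neg hit] at this
    exact hi (Fin.ext this)
  obtain ⟨b₁, hb₁, hr₁, hb₁i⟩ := exists_mem_slice h hit
  have hb₀S := mem_of_reachable_of_ne hr hne
  have hr₀₁ := hr.trans hr₁.symm
  have hne₁ : b₀ i ≠ b₁ i := hb₁i ▸ hi
  have hb₁' : b₁ ∈ B.erase b₀ :=
    (Multiset.mem_erase_of_ne fun h => hne₁ (by rw [h])).2 hb₁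
  obtain ⟨B'', rfl⟩ : ∃ B'', B = b₀ ::ₘ b₁ ::ₘ B'' :=
    ⟨(B.erase b₀).erase b₁, by rw [Multiset.cons_erase hb₁', Multiset.cons_erase hb₀]⟩
  have hadj := adj_update hb₀S (update_mem_of_reachable hS.1 hb₀S hr₀₁ hit) hne₁
  refine ⟨_, update b₀ i (b₁ i), Multiset.mem_cons_self _ _, hadj.reachable.symm.trans hr,
    (tail_update hit _).trans htail, hb₁i ▸ hdist_update_lt hi, ?_,
    sgnMonomial_sub_sgnMonomial_update_mem k hS hb₀S hr₀₁ hit hne₁ B''⟩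
  simp only [Multiset.cons_bind, ← add_assoc, tags_add_tags hS.1 hb₀S hr₀₁ hit hne₁]

theorem exists_sgnMonomial_cons_sub_mem {b₀ : Idx r} {B : Multiset (Idx r)} (hS : Signed t S)
    (h : tags t S a ≤ B.bind (tags t S)) (hb₀ : b₀ ∈ B)
    (hr : (hammingGraph S).Reachable b₀ a) (htail : tail t b₀ = tail t a) :
    ∃ B', (a ::ₘ B').bind (tags t S) = B.bind (tags t S) ∧
      sgnMonomial k S (a ::ₘ B') - sgnMonomial k S B ∈ Jtilde k t S := by
  by_cases hne : b₀ = a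
  · subst hne
    refine ⟨B.erase b₀, by rw [Multiset.cons_erase hb₀], ?_⟩
    rw [Multiset.cons_erase hb₀, sub_self]
    exact zero_mem _
  · obtain ⟨B₂, b₀', hb₀', hr', htail', hlt, hbind, hmem⟩ :=
      exists_sgnMonomial_sub_mem_closer k hS h hb₀ hr htail hne
    obtain ⟨B', hB', hmem'⟩ :=
      exists_sgnMonomial_cons_sub_mem hS (hbind ▸ h) hb₀' hr' htail'
    refine ⟨B', hB'.trans hbind, ?_⟩
    simpa only [sub_sub_sub_cancel_right] using sub_mem hmem' hmem
termination_by hdist b₀ a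

theorem sgnMonomial_sub_mem {A B : Multiset (Idx r)} (hS : Signed t S)
    (h : A.bind (tags t S) = B.bind (tags t S)) :
    sgnMonomial k S A - sgnMonomial k S B ∈ Jtilde k t S := by
  induction A using Multiset.induction_on generalizing B with
  | empty =>
    obtain rfl : B = 0 := Multiset.eq_zero_of_forall_notMem fun b hb => by
      have := Multiset.mem_bind.2 ⟨b, hb, (mem_tags (t := t) (S := S)).2 (.inl rfl)⟩
      simp [← h] at this
    simp
  | cons a A ih =>
    rw [Multiset.cons_bind] at h
    obtain ⟨b₀, hb₀, hr, htail⟩ := exists_mem_tail (h ▸ Multiset.le_add_right _ _)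
    obtain ⟨B', hB', hmem⟩ :=
      exists_sgnMonomial_cons_sub_mem k hS (h ▸ Multiset.le_add_right _ _) hb₀ hr htail
    rw [Multiset.cons_bind, ← h] at hB'
    have hJ : sgnMonomial k S (a ::ₘ A) - sgnMonomial k S (a ::ₘ B') ∈ Jtilde k t S := by
      rw [sgnMonomial_cons, sgnMonomial_cons, ← mul_sub]
      exact Ideal.mul_mem_left _ _ (ih (add_left_cancel hB').symm)
    simpa using add_mem hJ hmem

end Straightening

section Kernels

variable {t : ℕ} {S : Set (Idx r)} {A : Multiset (Idx r)}

variable (t S) in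
open scoped Classical in
noncomputable def weight (a : Idx r) : Tag S →₀ ℕ :=
  Multiset.toFinsupp (tags t S a)

lemma sum_map_weight_eq_iff {A B : Multiset (Idx r)} :
    (A.map (weight t S)).sum = (B.map (weight t S)).sum ↔
      A.bind (tags t S) = B.bind (tags t S) := by
  classical
  have hinj : Injective (Finsupp.toMultiset : (Tag S →₀ ℕ) → _) :=
    fun f g h => by simpa using congrArg Multiset.toFinsupp h
  rw [← hinj.eq_iff, map_multiset_sum, map_multiset_sum,
    Multiset.map_map, Multiset.map_map]
  simp [Function.comp_def, weight, Multiset.bind, Multiset.join]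

lemma prod_map_sgn_mul_self (A : Multiset (Idx r)) :
    (A.map (sgn k S)).prod * (A.map (sgn k S)).prod = 1 := by
  rw [← Multiset.prod_map_mul]
  simp [sgn_mul_self]

lemma prod_map_indicator_sgn (hA : ∀ x ∈ A, x ∈ S) :
    (A.map (S.indicator (sgn k S))).prod = (A.map (sgn k S)).prod := by
  rw [Multiset.map_congr rfl fun x hx => Set.indicator_of_mem (hA x hx) _]

lemma monomialMap_hbin_eq_zero (hS : Signed t S) (ε : Idx r → k)
    (hε : ∀ x ∈ S, ε x = sgn k S x)
    {a b : Idx r} {i : Fin n} (hab : Connected S a b) (hi : (i : ℕ) < t) (hne : a i ≠ b i) :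
    monomialMap (weight t S) ε (hbin k S {i} a b) = 0 := by
  obtain ⟨ha, hab⟩ := connected_iff.1 hab
  have hb := mem_of_reachable ha hab
  rw [hbin_singleton]
  apply monomialMap_X_mul_X_sub
  · simp only [weight, ← map_add, tags_add_tags hS.1 ha hab hi hne]
  · rw [hε a ha, hε b hb, hε _ (update_mem_of_reachable hS.1 ha hab hi),
      hε _ (update_mem_of_reachable hS.1 hb hab.symm hi)]
    exact sgn_mul_sgn k hS ha hab hi hne

theorem Jtilde_eq_ker (hS : Signed t S) :
    Jtilde k t S = RingHom.ker (monomialMap (weight t S) (sgn k S)) := by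
  refine le_antisymm ?_ (ker_monomialMap_le _ _ ?_ ?_)
  · rw [Jtilde, Ideal.span_le]
    rintro _ ⟨a, b, i, hab, hi, hne, rfl⟩
    exact monomialMap_hbin_eq_zero k hS _ (fun _ _ => rfl) hab hi hne
  · intro A hA
    simpa [hA] using prod_map_sgn_mul_self k (S := S) A
  · intro A B h _ _
    rw [inv_eq_of_mul_eq_one_right (prod_map_sgn_mul_self k A),
      inv_eq_of_mul_eq_one_right (prod_map_sgn_mul_self k B)]
    exact sgnMonomial_sub_mem k hS (sum_map_weight_eq_iff.1 h)

theorem Qideal_eq_ker (hS : Signed t S) :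
    Qideal k t S = RingHom.ker (monomialMap (weight t S) (S.indicator (sgn k S))) := by
  have hmemS : ∀ A : Multiset (Idx r), (A.map (S.indicator (sgn k S))).prod ≠ 0 →
      ∀ x ∈ A, x ∈ S := fun A hA x hx => by
    by_contra hxS
    exact hA (Multiset.prod_eq_zero
      (Multiset.mem_map.2 ⟨x, hx, Set.indicator_of_notMem hxS _⟩))
  refine le_antisymm ?_ (ker_monomialMap_le _ _ ?_ ?_)
  · rw [Qideal, Submodule.add_eq_sup, sup_le_iff, VarIdeal, Jtilde, Ideal.span_le,
      Ideal.span_le]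
    refine ⟨?_, ?_⟩
    · rintro _ ⟨a, ha, rfl⟩
      simp [monomialMap, ha]
    · rintro _ ⟨a, b, i, hab, hi, hne, rfl⟩
      exact monomialMap_hbin_eq_zero k hS _ (fun x hx => Set.indicator_of_mem hx _) hab hi hne
  · intro A hA
    obtain ⟨a, haA, ha⟩ : ∃ a ∈ A, a ∉ S := by
      by_contra! h
      rw [prod_map_indicator_sgn k h] at hA
      simpa [hA] using prod_map_sgn_mul_self k (S := S) A
    rw [← Multiset.cons_erase haA, ← Multiset.singleton_add, Multiset.toFinsupp_add,
      Multiset.toFinsupp_singleton, monomial_single_add, pow_one]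
    exact Ideal.mul_mem_right _ _ (Submodule.mem_sup_left (Ideal.subset_span ⟨a, ha, rfl⟩))
  · intro A B h hA hB
    rw [prod_map_indicator_sgn k (hmemS A hA), prod_map_indicator_sgn k (hmemS B hB),
      inv_eq_of_mul_eq_one_right (prod_map_sgn_mul_self k A),
      inv_eq_of_mul_eq_one_right (prod_map_sgn_mul_self k B)]
    exact Submodule.mem_sup_right (sgnMonomial_sub_mem k hS (sum_map_weight_eq_iff.1 h))

end Kernels

theorem stmt14 (t : ℕ) (S : Set (Idx r)) (hS : Signed t S) :
    (Jtilde k t S).IsPrime ∧ (Qideal k t S).IsPrime := by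
  rw [Jtilde_eq_ker k hS, Qideal_eq_ker k hS]
  exact ⟨RingHom.ker_isPrime _, RingHom.ker_isPrime _⟩
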